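/- Let ρ(t+1)ₖ = min(Iₖ(ρ(t)), P_{max,k}) with Iₖ the affine standard interference function above. If the target ξ is feasible (some ρ̄ in the power box satisfies Iₖ(ρ̄) ≤ ρ̄ₖ for all k), then starting from ρ(0)ₖ = P_{max,k} the sequence ρ(t) is componentwise nonincreasing, remains in the box, and converges to the componentwise minimal power vector achieving SINRₖ ≥ ξ for all k. -/
import Mathlib

open Filter Finset

/-- The power-budget-constrained iteration `ρ(t+1)_k = min(I_k(ρ(t)), P_{max,k})` started
from `ρ(0) = P_max` is componentwise nonincreasing, stays in the box, and (under
feasibility of the target `ξ`) converges to the componentwise minimal power vector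
achieving `SINR_k ≥ ξ` for all `k`. -/
theorem constrained_power_iteration_converges {K : ℕ} (S Nk Pmax : Fin K → ℝ)
    (A : Fin K → Fin K → ℝ) (ξ : ℝ)
    (hS : ∀ k, 0 < S k) (hN : ∀ k, 0 < Nk k) (hA : ∀ k k', 0 ≤ A k k') (hξ : 0 < ξ)
    (I : (Fin K → ℝ) → Fin K → ℝ)
    (hI : ∀ ρ k, I ρ k = ξ * ((∑ k', ρ k' * A k k') + Nk k) / S k)
    (ρbar : Fin K → ℝ) (hbox : ∀ k, 0 ≤ ρbar k ∧ ρbar k ≤ Pmax k)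
    (hfeas : ∀ k, I ρbar k ≤ ρbar k)
    (seq : ℕ → Fin K → ℝ) (h0 : ∀ k, seq 0 k = Pmax k)
    (hstep : ∀ t k, seq (t + 1) k = min (I (seq t) k) (Pmax k)) :
    (∀ t k, seq (t + 1) k ≤ seq t k) ∧
    (∀ t k, 0 ≤ seq t k ∧ seq t k ≤ Pmax k) ∧
    ∃ ρstar : Fin K → ℝ, Filter.Tendsto seq Filter.atTop (nhds ρstar) ∧
      (∀ k, 0 ≤ ρstar k ∧ ρstar k ≤ Pmax k) ∧
      (∀ k, ξ ≤ ρstar k * S k / ((∑ k', ρstar k' * A k k') + Nk k)) ∧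
      (∀ ρ : Fin K → ℝ, (∀ k, 0 ≤ ρ k ∧ ρ k ≤ Pmax k) →
        (∀ k, ξ ≤ ρ k * S k / ((∑ k', ρ k' * A k k') + Nk k)) → ∀ k, ρstar k ≤ ρ k) := by
  have hPmax : ∀ k, 0 ≤ Pmax k := fun k => le_trans (hbox k).1 (hbox k).2
  -- monotonicity of I
  have hImono : ∀ ρ σ : Fin K → ℝ, (∀ k, ρ k ≤ σ k) → ∀ k, I ρ k ≤ I σ k := by
    intro ρ σ h k
    rw [hI, hI]
    have hsum : (∑ k', ρ k' * A k k') ≤ ∑ k', σ k' * A k k' :=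
      Finset.sum_le_sum fun j _ => mul_le_mul_of_nonneg_right (h j) (hA k j)
    have h2 : ξ * ((∑ k', ρ k' * A k k') + Nk k) ≤ ξ * ((∑ k', σ k' * A k k') + Nk k) :=
      mul_le_mul_of_nonneg_left (by linarith) hξ.le
    exact div_le_div_of_nonneg_right h2 (hS k).le
  -- positivity of I on nonneg vectors
  have hIpos : ∀ ρ : Fin K → ℝ, (∀ k, 0 ≤ ρ k) → ∀ k, 0 < I ρ k := by
    intro ρ h k
    rw [hI]
    have hsum : 0 ≤ ∑ k', ρ k' * A k k' :=
      Finset.sum_nonneg fun j _ => mul_nonneg (h j) (hA k j)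
    have : 0 < ξ * ((∑ k', ρ k' * A k k') + Nk k) :=
      mul_pos hξ (by linarith [hN k])
    exact div_pos this (hS k)
  -- componentwise nonincreasing
  have hdec : ∀ t k, seq (t + 1) k ≤ seq t k := by
    intro t
    induction t with
    | zero => intro k; rw [hstep, h0]; exact min_le_right _ _
    | succ t ih =>
      intro k
      rw [hstep (t + 1), hstep t]
      exact min_le_min (hImono _ _ ih k) le_rfl
  -- stays in box
  have hnn : ∀ t k, 0 ≤ seq t k := by
    intro t
    induction t with
    | zero => intro k; rw [h0]; exact hPmax k
    | succ t ih =>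
      intro k
      rw [hstep]
      exact le_min (hIpos _ ih k).le (hPmax k)
  have hle0 : ∀ t k, seq t k ≤ Pmax k := by
    intro t k
    cases t with
    | zero => rw [h0]
    | succ t => rw [hstep]; exact min_le_right _ _
  refine ⟨hdec, fun t k => ⟨hnn t k, hle0 t k⟩, ?_⟩
  -- limit
  set ρstar : Fin K → ℝ := fun k => ⨅ t, seq t k with hρstar
  have hanti : ∀ k, Antitone fun t => seq t k := fun k =>
    antitone_nat_of_succ_le fun t => hdec t k
  have hbdd : ∀ k, BddBelow (Set.range fun t => seq t k) := fun k =>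
    ⟨0, fun x ⟨t, ht⟩ => ht ▸ hnn t k⟩
  have htend : ∀ k, Tendsto (fun t => seq t k) atTop (nhds (ρstar k)) := fun k =>
    tendsto_atTop_ciInf (hanti k) (hbdd k)
  have htendseq : Tendsto seq atTop (nhds ρstar) := tendsto_pi_nhds.mpr htend
  have hstar_nn : ∀ k, 0 ≤ ρstar k := fun k => le_ciInf fun t => hnn t k
  have hstar_le : ∀ k, ρstar k ≤ Pmax k := fun k => by
    have := ciInf_le (hbdd k) 0
    rwa [h0 k] at this
  -- fixed point equation
  have hfix : ∀ k, ρstar k = min (I ρstar k) (Pmax k) := by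
    intro k
    have h1 : Tendsto (fun t => seq (t + 1) k) atTop (nhds (ρstar k)) :=
      (htend k).comp (tendsto_add_atTop_nat 1)
    have h2 : Tendsto (fun t => I (seq t) k) atTop (nhds (I ρstar k)) := by
      have : Tendsto (fun t => ξ * ((∑ k', seq t k' * A k k') + Nk k) / S k) atTop
          (nhds (ξ * ((∑ k', ρstar k' * A k k') + Nk k) / S k)) := by
        apply Tendsto.div_const
        apply Tendsto.const_mul
        apply Tendsto.add_const
        exact tendsto_finset_sum _ fun j _ => (htend j).mul_const _
      simp only [hI]
      exact this
    have h3 : Tendsto (fun t => seq (t + 1) k) atTop (nhds (min (I ρstar k) (Pmax k))) := by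
      have := h2.min (tendsto_const_nhds (x := Pmax k))
      convert this using 2 with t
      exact hstep t k
    exact tendsto_nhds_unique h1 h3
  have hstar_leI : ∀ k, ρstar k ≤ I ρstar k := fun k => (hfix k).le.trans (min_le_left _ _)
  -- key minimality lemma via scaling argument
  have hkey : ∀ ρ : Fin K → ℝ, (∀ k, 0 < ρ k) → (∀ k, I ρ k ≤ ρ k) → ∀ k, ρstar k ≤ ρ k := by
    intro ρ hpos hf k
    have hne : (Finset.univ : Finset (Fin K)).Nonempty := ⟨k, mem_univ k⟩
    set α := univ.sup' hne (fun j => ρstar j / ρ j) with hα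
    by_cases hα1 : α ≤ 1
    · have h1 : ρstar k / ρ k ≤ α := le_sup' (fun j => ρstar j / ρ j) (mem_univ k)
      exact (div_le_one (hpos k)).mp (h1.trans hα1)
    · push_neg at hα1
      exfalso
      obtain ⟨k0, -, hk0⟩ := exists_mem_eq_sup' hne (fun j => ρstar j / ρ j)
      have hub : ∀ j, ρstar j ≤ α * ρ j := by
        intro j
        have h1 : ρstar j / ρ j ≤ α := le_sup' (fun j => ρstar j / ρ j) (mem_univ j)
        calc ρstar j = (ρstar j / ρ j) * ρ j := (div_mul_cancel₀ _ (hpos j).ne').symm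
          _ ≤ α * ρ j := mul_le_mul_of_nonneg_right h1 (hpos j).le
      have h1 : ρstar k0 ≤ I ρstar k0 := hstar_leI k0
      have h2 : I ρstar k0 ≤ I (fun j => α * ρ j) k0 := hImono _ _ hub k0
      have h3 : I (fun j => α * ρ j) k0 < α * I ρ k0 := by
        rw [hI, hI]
        have hsum : (∑ j, (α * ρ j) * A k0 j) = α * ∑ j, ρ j * A k0 j := by
          rw [Finset.mul_sum]
          exact Finset.sum_congr rfl fun j _ => by ring
        have hX : 0 ≤ ∑ j, ρ j * A k0 j :=
          Finset.sum_nonneg fun j _ => mul_nonneg (hpos j).le (hA k0 j)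
        rw [hsum, mul_div_assoc' α]
        rw [div_lt_div_iff₀ (hS k0) (hS k0)]
        nlinarith [mul_pos (mul_pos hξ (hN k0)) (hS k0),
          mul_pos (sub_pos.mpr hα1) (mul_pos (mul_pos hξ (hN k0)) (hS k0))]
      have h4 : α * I ρ k0 ≤ α * ρ k0 :=
        mul_le_mul_of_nonneg_left (hf k0) (by linarith)
      have h5 : ρstar k0 = α * ρ k0 := by
        rw [hα.trans hk0]
        exact (div_mul_cancel₀ _ (hpos k0).ne').symm
      linarith
  -- SINR conversion helpers
  have hDpos : ∀ (ρ : Fin K → ℝ), (∀ k, 0 ≤ ρ k) → ∀ k,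
      0 < (∑ k', ρ k' * A k k') + Nk k := by
    intro ρ h k
    have : 0 ≤ ∑ k', ρ k' * A k k' :=
      Finset.sum_nonneg fun j _ => mul_nonneg (h j) (hA k j)
    linarith [hN k]
  have hSINR_of_I : ∀ (ρ : Fin K → ℝ), (∀ k, 0 ≤ ρ k) → ∀ k, I ρ k ≤ ρ k →
      ξ ≤ ρ k * S k / ((∑ k', ρ k' * A k k') + Nk k) := by
    intro ρ h k hk
    have hD := hDpos ρ h k
    rw [le_div_iff₀ hD]
    rw [hI, div_le_iff₀ (hS k)] at hk
    nlinarith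
  have hI_of_SINR : ∀ (ρ : Fin K → ℝ), (∀ k, 0 ≤ ρ k) → ∀ k,
      ξ ≤ ρ k * S k / ((∑ k', ρ k' * A k k') + Nk k) → I ρ k ≤ ρ k := by
    intro ρ h k hk
    have hD := hDpos ρ h k
    rw [le_div_iff₀ hD] at hk
    rw [hI, div_le_iff₀ (hS k)]
    nlinarith
  -- ρbar is positive
  have hbarpos : ∀ k, 0 < ρbar k := fun k =>
    lt_of_lt_of_le (hIpos ρbar (fun j => (hbox j).1) k) (hfeas k)
  -- ρstar ≤ ρbar, hence I ρstar ≤ ρstar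
  have hstarbar : ∀ k, ρstar k ≤ ρbar k := hkey ρbar hbarpos hfeas
  have hIstar : ∀ k, I ρstar k ≤ ρstar k := by
    intro k
    have h1 : I ρstar k ≤ I ρbar k := hImono _ _ hstarbar k
    have h2 : I ρstar k ≤ Pmax k := h1.trans ((hfeas k).trans (hbox k).2)
    rw [hfix k]
    exact le_min le_rfl h2
  refine ⟨ρstar, htendseq, fun k => ⟨hstar_nn k, hstar_le k⟩,
    fun k => hSINR_of_I ρstar hstar_nn k (hIstar k), ?_⟩
  intro ρ hρbox hρSINR
  have hρpos : ∀ k, 0 < ρ k := by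
    intro k
    have hIle : I ρ k ≤ ρ k := hI_of_SINR ρ (fun j => (hρbox j).1) k (hρSINR k)
    exact lt_of_lt_of_le (hIpos ρ (fun j => (hρbox j).1) k) hIle
  exact hkey ρ hρpos fun k => hI_of_SINR ρ (fun j => (hρbox j).1) k (hρSINR k)
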